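/- Let G be a finite group, C a finite category with skeletal Möbius inversion, and F : C → (finite G-sets) a functor. Then the G-category ∫F has series Lefschetz invariant Λ_Σ(∫F) = Σ_{x ∈ Obj(C)} k_C(x)·[F(x)] in the rational Burnside ring Ω(G) = Q ⊗ Ω_Z(G), where k_C is the skeletal weighting on C and [F(x)] is the class of the G-set F(x). -/

import Mathlib

/-!
Fixing `H ≤ G`, an `H`-fixed non-degenerate `n`-simplex of `∫F` is a path `x₀ → ⋯ → xₙ` of
non-identity morphisms of `C` together with an `H`-fixed point of `F(x₀)`, which determines
the rest of the chain. With `u(x) = |F(x)^H|` and `Z = ζ_C - 1`, the count is `u ⬝ Zⁿ 𝟙`.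
Since `ζ_C` commutes with the idempotent `e_C` and `e_C 𝟙 = 𝟙`, also `Zⁿ 𝟙 = (ζ_C - e_C)ⁿ 𝟙`,
so by Cramer's rule the generating series equals `p / q` with `q` the reversed characteristic
polynomial of `ζ_C - e_C` and `p = u ⬝ adj(1 - t(ζ_C - e_C)) 𝟙`. At `t = -1` the matrix
`1 - e_C + ζ_C` has inverse `ν + 1 - e_C`, because `ν` lives in the corner algebra
`e_C A e_C` where it inverts `ζ_C`; hence `q(-1) ≠ 0` and `p(-1) = q(-1) · u ⬝ ν 𝟙`.
-/

open CategoryTheory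
open scoped Classical

universe u v

/-- Convolution product on the Möbius algebra of rational-valued functions
on pairs of objects of a finite category. -/
noncomputable def conv (C : Type u) [Category.{v} C] [Fintype C]
    (α β : C → C → ℚ) : C → C → ℚ :=
  fun x y => ∑ z : C, α x z * β z y

/-- The size of the isomorphism class of an object. -/
noncomputable def isoCard (C : Type u) [Category.{v} C] [Fintype C] (x : C) : ℚ :=
  ((Finset.univ.filter fun z : C => Nonempty (x ≅ z)).card : ℚ)

/-- The idempotent `e_C` : `e_C(x,y) = 1/|[x]|` if `x ≅ y`, and `0` otherwise. -/
noncomputable def eFun (C : Type u) [Category.{v} C] [Fintype C] : C → C → ℚ :=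
  fun x y => if Nonempty (x ≅ y) then 1 / isoCard C x else 0

/-- The zeta function of a finite category: `ζ_C(x,y) = |C(x,y)|`. -/
noncomputable def zeta (C : Type u) [Category.{v} C] [Fintype C]
    [∀ x y : C, Fintype (x ⟶ y)] : C → C → ℚ :=
  fun x y => (Fintype.card (x ⟶ y) : ℚ)

/-- The Kronecker delta, the multiplicative identity of the Möbius algebra. -/
noncomputable def delta (C : Type u) [Category.{v} C] [Fintype C] : C → C → ℚ :=
  fun x y => if x = y then 1 else 0

universe w

/-- A non-degenerate `n`-simplex of the nerve of the Grothendieck construction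
`∫F` of a functor `F : C → (G-sets)`: a chain of `n` composable non-identity
morphisms of `∫F`. -/
structure FChain {C : Type u} [Category.{v} C] (F : C → Type w)
    (Fmap : ∀ {x y : C}, (x ⟶ y) → F x → F y) (n : ℕ) where
  obj : Fin (n + 1) → C
  pt : ∀ i : Fin (n + 1), F (obj i)
  hom : ∀ i : Fin n, obj i.castSucc ⟶ obj i.succ
  compat : ∀ i : Fin n, Fmap (hom i) (pt i.castSucc) = pt i.succ
  nondeg : ∀ i : Fin n, ¬ ∃ h : obj i.castSucc = obj i.succ, hom i = eqToHom h

open Matrix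

namespace Matrix

variable {ι R : Type*} [Fintype ι] [DecidableEq ι] [CommSemiring R]

theorem sum_prod_path_eq_dotProduct_pow_mulVec_one (Z : Matrix ι ι R) (n : ℕ) (v : ι → R) :
    ∑ f : Fin (n + 1) → ι, v (f 0) * ∏ i : Fin n, Z (f i.castSucc) (f i.succ) =
      v ⬝ᵥ (Z ^ n *ᵥ 1) := by
  induction n generalizing v with
  | zero => simp [dotProduct, ← (Equiv.funUnique (Fin 1) ι).symm.sum_comp]
  | succ n ih =>
    rw [← (Fin.consEquiv fun _ => ι).sum_comp, Fintype.sum_prod_type, pow_succ', ← mulVec_mulVec]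
    simp only [Fin.consEquiv_apply, Fin.prod_univ_succ, Fin.castSucc_zero, Fin.cons_zero,
      Fin.cons_succ, ← Fin.succ_castSucc]
    refine Finset.sum_congr rfl fun x _ => ?_
    rw [← Finset.mul_sum, ih (Z x)]
    rfl

section CharpolyRev

open Polynomial

variable {ι K : Type*} [Fintype ι] [DecidableEq ι] [CommRing K]

theorem mapMatrix_evalRingHom_one_sub_X_smul (M : Matrix ι ι K) (a : K) :
    (evalRingHom a).mapMatrix (1 - (X : K[X]) • M.map C) = 1 - a • M := by
  ext i j
  simp only [RingHom.mapMatrix_apply, map_apply, sub_apply, smul_apply, one_apply, smul_eq_mul,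
    coe_evalRingHom]
  split_ifs <;> simp [mul_comm (M i j)]

theorem eval_charpolyRev_eq_det (M : Matrix ι ι K) (a : K) :
    M.charpolyRev.eval a = (1 - a • M).det := by
  rw [charpolyRev, ← coe_evalRingHom, RingHom.map_det, mapMatrix_evalRingHom_one_sub_X_smul]

theorem eval_dotProduct_adjugate_mulVec (M : Matrix ι ι K) (a : K) (u v : ι → K) :
    ((C ∘ u) ⬝ᵥ ((1 - (X : K[X]) • M.map C).adjugate *ᵥ (C ∘ v))).eval a =
      u ⬝ᵥ ((1 - a • M).adjugate *ᵥ v) := by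
  rw [← coe_evalRingHom, RingHom.map_dotProduct]
  congr 1
  · ext i; simp
  · ext i
    rw [Function.comp_apply, RingHom.map_mulVec, ← RingHom.mapMatrix_apply, RingHom.map_adjugate,
      mapMatrix_evalRingHom_one_sub_X_smul]
    congr 1; ext j; simp

theorem adjugate_eq_det_smul_of_mul_eq_one {A B : Matrix ι ι K} (h : A * B = 1) :
    A.adjugate = A.det • B := by
  calc A.adjugate = A.adjugate * A * B := by rw [mul_assoc, h, mul_one]
    _ = A.det • B := by rw [adjugate_mul, smul_mul, one_mul]

theorem one_sub_X_smul_mulVec_mk_pow_mulVec (M : Matrix ι ι K) (v : ι → K) :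
    (1 - (PowerSeries.X : PowerSeries K) • M.map PowerSeries.C) *ᵥ
        (fun i => PowerSeries.mk fun n => (M ^ n *ᵥ v) i) = PowerSeries.C ∘ v := by
  ext i n
  rw [sub_mulVec, one_mulVec, smul_mulVec, Pi.sub_apply, Pi.smul_apply, smul_eq_mul, map_sub]
  rcases n with _ | n
  · simp
  · rw [PowerSeries.coeff_succ_X_mul, PowerSeries.coeff_mk, pow_succ', ← mulVec_mulVec,
      Function.comp_apply, PowerSeries.coeff_C, if_neg n.succ_ne_zero, sub_eq_zero]
    simp [mulVec, dotProduct, map_sum, PowerSeries.coeff_C_mul]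

theorem mk_dotProduct_pow_mulVec_mul_charpolyRev (M : Matrix ι ι K) (u v : ι → K) :
    PowerSeries.mk (fun n => u ⬝ᵥ (M ^ n *ᵥ v)) * (M.charpolyRev : PowerSeries K) =
      ((C ∘ u) ⬝ᵥ ((1 - (X : K[X]) • M.map C).adjugate *ᵥ (C ∘ v)) : K[X]) := by
  set τ : K[X] →+* PowerSeries K := coeToPowerSeries.ringHom (R := K)
  set S : ι → PowerSeries K := fun i => PowerSeries.mk fun n => (M ^ n *ᵥ v) i
  have hτ : τ.mapMatrix (1 - (X : K[X]) • M.map C) =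
      1 - (PowerSeries.X : PowerSeries K) • M.map PowerSeries.C := by
    ext i j : 1
    simp only [RingHom.mapMatrix_apply, map_apply, sub_apply, smul_apply, one_apply, smul_eq_mul]
    split_ifs <;> simp [τ] <;> ring
  have hmk : PowerSeries.mk (fun n => u ⬝ᵥ (M ^ n *ᵥ v)) = (PowerSeries.C ∘ u) ⬝ᵥ S := by
    ext n
    simp [S, dotProduct, map_sum, PowerSeries.coeff_C_mul]
  have hcramer : τ M.charpolyRev • S =
      τ.mapMatrix (1 - (X : K[X]) • M.map C).adjugate *ᵥ (PowerSeries.C ∘ v) := by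
    rw [← one_sub_X_smul_mulVec_mk_pow_mulVec, ← hτ, mulVec_mulVec, ← map_mul, adjugate_mul,
      charpolyRev, RingHom.mapMatrix_apply, Matrix.map_smul' _ _ _ (map_mul τ),
      Matrix.map_one _ (map_zero τ) (map_one τ), smul_mulVec, one_mulVec]
  calc PowerSeries.mk (fun n => u ⬝ᵥ (M ^ n *ᵥ v)) * τ M.charpolyRev
      = (PowerSeries.C ∘ u) ⬝ᵥ (τ M.charpolyRev • S) := by
        rw [hmk, dotProduct_smul, smul_eq_mul, mul_comm]
    _ = τ ((C ∘ u) ⬝ᵥ ((1 - (X : K[X]) • M.map C).adjugate *ᵥ (C ∘ v))) := by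
      rw [hcramer, RingHom.map_dotProduct]
      congr 1
      · ext i : 1
        simp [τ]
      · ext i : 1
        rw [Function.comp_apply, RingHom.map_mulVec]
        congr 1
        ext j : 1
        simp [τ]

end CharpolyRev

end Matrix

noncomputable def eMat (C : Type u) [Category.{v} C] [Fintype C] : Matrix C C ℚ :=
  Matrix.of (eFun C)

noncomputable def zetaMat (C : Type u) [Category.{v} C] [Fintype C]
    [∀ x y : C, Fintype (x ⟶ y)] : Matrix C C ℚ :=
  Matrix.of (zeta C)

section MoebiusAlgebra

variable {C : Type u} [Category.{v} C] [Fintype C]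

theorem isoCard_eq_of_iso {x z : C} (i : x ≅ z) : isoCard C x = isoCard C z := by
  have hiso : ∀ y, Nonempty (x ≅ y) ↔ Nonempty (z ≅ y) := fun y =>
    ⟨fun ⟨j⟩ => ⟨i.symm ≪≫ j⟩, fun ⟨j⟩ => ⟨i ≪≫ j⟩⟩
  simp only [isoCard, hiso]

theorem isoCard_pos (x : C) : 0 < isoCard C x := by
  unfold isoCard
  exact_mod_cast Finset.card_pos.2 ⟨x, by simpa using ⟨Iso.refl x⟩⟩

theorem eFun_eq_of_iso_left {x z : C} (i : x ≅ z) (y : C) : eFun C z y = eFun C x y := by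
  have hiso : Nonempty (z ≅ y) ↔ Nonempty (x ≅ y) :=
    ⟨fun ⟨j⟩ => ⟨i ≪≫ j⟩, fun ⟨j⟩ => ⟨i.symm ≪≫ j⟩⟩
  simp only [eFun, hiso, isoCard_eq_of_iso i]

theorem eFun_comm (x y : C) : eFun C x y = eFun C y x := by
  by_cases h : Nonempty (x ≅ y)
  · obtain ⟨i⟩ := h
    simp only [eFun, isoCard_eq_of_iso i, if_pos (⟨i⟩ : Nonempty (x ≅ y)),
      if_pos (⟨i.symm⟩ : Nonempty (y ≅ x))]
  · have h' : ¬ Nonempty (y ≅ x) := fun ⟨i⟩ => h ⟨i.symm⟩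
    simp only [eFun, if_neg h, if_neg h']

theorem sum_eFun_mul {x : C} (g : C → ℚ) (hg : ∀ z, (x ≅ z) → g z = g x) :
    ∑ z, eFun C x z * g z = g x := by
  have hterm : ∀ z, eFun C x z * g z = if Nonempty (x ≅ z) then g x / isoCard C x else 0 := by
    intro z
    by_cases h : Nonempty (x ≅ z)
    · rw [eFun, if_pos h, if_pos h, hg z (Classical.choice h), one_div_mul_eq_div]
    · rw [eFun, if_neg h, if_neg h, zero_mul]
  rw [Finset.sum_congr rfl fun z _ => hterm z, ← Finset.sum_filter, Finset.sum_const,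
    nsmul_eq_mul, ← isoCard, mul_div_cancel₀ _ (isoCard_pos x).ne']

theorem eMat_mul_eq_self {N : Matrix C C ℚ} (hN : ∀ x z y, (x ≅ z) → N z y = N x y) :
    eMat C * N = N := by
  ext x y
  exact sum_eFun_mul (fun z => N z y) fun z i => hN x z y i

theorem mul_eMat_eq_self {N : Matrix C C ℚ} (hN : ∀ x y z, (y ≅ z) → N x z = N x y) :
    N * eMat C = N := by
  ext x y
  rw [Matrix.mul_apply]
  simp only [eMat, Matrix.of_apply, eFun_comm _ y, mul_comm (N x _)]
  exact sum_eFun_mul (fun z => N x z) fun z i => hN x y z i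

theorem eMat_mulVec_one : eMat C *ᵥ 1 = 1 := by
  ext x
  simpa [mulVec, dotProduct, eMat] using sum_eFun_mul (x := x) 1 fun _ _ => rfl

theorem eMat_mul_eMat : eMat C * eMat C = eMat C :=
  eMat_mul_eq_self fun _ _ y i => eFun_eq_of_iso_left i y

theorem eMat_mul_of_corner {N : Matrix C C ℚ} (h : eMat C * (N * eMat C) = N) :
    eMat C * N = N := by
  rw [← h, ← mul_assoc, eMat_mul_eMat]

variable [∀ x y : C, Fintype (x ⟶ y)]

theorem zeta_eq_of_iso {x x' y y' : C} (i : x ≅ x') (j : y ≅ y') :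
    zeta C x y = zeta C x' y' := by
  simp only [zeta, Fintype.card_congr (i.homCongr j)]

theorem eMat_mul_zetaMat : eMat C * zetaMat C = zetaMat C :=
  eMat_mul_eq_self fun _ _ y i => zeta_eq_of_iso i.symm (Iso.refl y)

theorem zetaMat_mul_eMat : zetaMat C * eMat C = zetaMat C :=
  mul_eMat_eq_self fun x _ _ j => zeta_eq_of_iso (Iso.refl x) j.symm

theorem commute_zetaMat_sub_one_eMat : Commute (zetaMat C - 1) (eMat C) := by
  simp only [Commute, SemiconjBy, sub_mul, mul_sub, zetaMat_mul_eMat, eMat_mul_zetaMat, one_mul,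
    mul_one]

theorem zetaMat_sub_eMat_pow_mulVec_one (n : ℕ) :
    (zetaMat C - eMat C) ^ n *ᵥ 1 = (zetaMat C - 1) ^ n *ᵥ 1 := by
  have hpow : ∀ n, eMat C ^ n *ᵥ 1 = 1 := fun n => by
    induction n with
    | zero => exact Matrix.one_mulVec 1
    | succ n ih => rw [pow_succ, ← Matrix.mulVec_mulVec, eMat_mulVec_one, ih]
  have hfactor : zetaMat C - eMat C = (zetaMat C - 1) * eMat C := by
    rw [sub_mul, zetaMat_mul_eMat, one_mul]
  rw [hfactor, commute_zetaMat_sub_one_eMat.mul_pow, ← mulVec_mulVec, hpow]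

theorem one_add_zetaMat_sub_eMat_mul {N : Matrix C C ℚ} (hl : zetaMat C * N = eMat C)
    (he : eMat C * N = N) : (1 + (zetaMat C - eMat C)) * (N + 1 - eMat C) = 1 := by
  simp only [add_mul, sub_mul, mul_add, mul_sub, one_mul, mul_one, hl, he, eMat_mul_eMat,
    zetaMat_mul_eMat]
  abel

end MoebiusAlgebra

theorem card_nonidentity_hom {C : Type u} [Category.{v} C] [Fintype C] [∀ x y : C, Fintype (x ⟶ y)]
    (x y : C) :
    (Nat.card {φ : x ⟶ y // ¬ ∃ h : x = y, φ = eqToHom h} : ℚ) = (zetaMat C - 1) x y := by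
  rw [Nat.card_eq_fintype_card, Fintype.card_subtype_compl,
    Nat.cast_sub (Fintype.card_subtype_le _), Matrix.sub_apply, one_apply]
  congr 1
  by_cases h : x = y
  · subst h
    simp
  · simp [h]

section Chains

variable {G : Type*} [Group G] {C : Type u} [Category.{v} C] (F : C → Type w)
  [∀ x : C, MulAction G (F x)] (Fmap : ∀ {x y : C}, (x ⟶ y) → F x → F y)

namespace FChain

def transport {n : ℕ} (obj : Fin (n + 1) → C) (hom : ∀ i : Fin n, obj i.castSucc ⟶ obj i.succ)
    (a : F (obj 0)) (i : Fin (n + 1)) : F (obj i) :=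
  Fin.induction a (fun j b => Fmap (hom j) b) i

variable {F Fmap}

theorem transport_succ {n : ℕ} (obj : Fin (n + 1) → C)
    (hom : ∀ i : Fin n, obj i.castSucc ⟶ obj i.succ) (a : F (obj 0)) (i : Fin n) :
    transport F Fmap obj hom a i.succ = Fmap (hom i) (transport F Fmap obj hom a i.castSucc) :=
  Fin.induction_succ _ _ i

theorem transport_pt_zero {n : ℕ} (c : FChain F (fun φ => Fmap φ) n) :
    transport F Fmap c.obj c.hom (c.pt 0) = c.pt := by
  funext i
  induction i using Fin.induction with
  | zero => rfl
  | succ j ih => rw [transport_succ, ih]; exact c.compat j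

theorem transport_fixed
    (hFequiv : ∀ {x y : C} (φ : x ⟶ y) (g : G) (a : F x), Fmap φ (g • a) = g • Fmap φ a)
    {H : Subgroup G} {n : ℕ} (obj : Fin (n + 1) → C)
    (hom : ∀ i : Fin n, obj i.castSucc ⟶ obj i.succ) {a : F (obj 0)} (ha : ∀ h ∈ H, h • a = a)
    (i : Fin (n + 1)) :
    ∀ h ∈ H, h • transport F Fmap obj hom a i = transport F Fmap obj hom a i := by
  induction i using Fin.induction with
  | zero => exact ha
  | succ j ih =>
    intro h hh
    rw [transport_succ, ← hFequiv, ih h hh]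

def fixedEquiv
    (hFequiv : ∀ {x y : C} (φ : x ⟶ y) (g : G) (a : F x), Fmap φ (g • a) = g • Fmap φ a)
    (H : Subgroup G) (n : ℕ) :
    {c : FChain F (fun φ => Fmap φ) n // ∀ i, ∀ h ∈ H, h • c.pt i = c.pt i} ≃
      Σ obj : Fin (n + 1) → C,
        (∀ i : Fin n, {φ : obj i.castSucc ⟶ obj i.succ //
          ¬ ∃ h : obj i.castSucc = obj i.succ, φ = eqToHom h}) ×
        {a : F (obj 0) // ∀ h ∈ H, h • a = a} where
  toFun c := ⟨c.1.obj, fun i => ⟨c.1.hom i, c.1.nondeg i⟩, ⟨c.1.pt 0, c.2 0⟩⟩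
  invFun d :=
    ⟨⟨d.1, transport F Fmap d.1 (fun i => (d.2.1 i).1) d.2.2.1, fun i => (d.2.1 i).1,
        fun i => (transport_succ _ _ _ i).symm, fun i => (d.2.1 i).2⟩,
      transport_fixed hFequiv _ _ d.2.2.2⟩
  left_inv := by
    rintro ⟨c, hc⟩
    obtain ⟨obj, pt, hom, compat, nondeg⟩ := c
    have hpt := transport_pt_zero (Fmap := Fmap) ⟨obj, pt, hom, compat, nondeg⟩
    simp only at hpt
    simp only [hpt]
  right_inv _ := rfl

theorem card_fixed [Fintype C] [∀ x y : C, Fintype (x ⟶ y)] [∀ x : C, Finite (F x)]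
    (hFequiv : ∀ {x y : C} (φ : x ⟶ y) (g : G) (a : F x), Fmap φ (g • a) = g • Fmap φ a)
    (H : Subgroup G) (n : ℕ) :
    (Nat.card {c : FChain F (fun φ => Fmap φ) n // ∀ i, ∀ h ∈ H, h • c.pt i = c.pt i} : ℚ) =
      (fun x => (Nat.card {a : F x // ∀ h ∈ H, h • a = a} : ℚ)) ⬝ᵥ ((zetaMat C - 1) ^ n *ᵥ 1) := by
  rw [Nat.card_congr (fixedEquiv hFequiv H n), Nat.card_sigma,
    ← sum_prod_path_eq_dotProduct_pow_mulVec_one]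
  push_cast
  refine Finset.sum_congr rfl fun obj _ => ?_
  rw [Nat.card_prod, Nat.card_pi, Nat.cast_mul, Nat.cast_prod, mul_comm]
  simp only [card_nonidentity_hom]

end FChain

end Chains

/-- let `C` be a finite category with skeletal Möbius inversion
(with `ν` the inverse of `ζ_C` in the corner algebra, so that the skeletal
weighting is `k_C = ν·𝟙`), and `F : C → (finite G-sets)` a functor.  Then the
`G`-category `∫F` has series Lefschetz invariant
`Λ_Σ(∫F) = Σ_x k_C(x)·[F(x)] ∈ Ω(G)`: expressed through the mark homomorphisms
(which detect equality in the rational Burnside ring `Ω(G)`), for every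
subgroup `H ≤ G` the generating power series of `H`-fixed non-degenerate
simplices of the nerve of `∫F` is a rational function `p/q` regular at
`t = −1`, whose value there is `Σ_x k_C(x)·|F(x)^H|`. -/
theorem series_lefschetz_grothendieck {G : Type*} [Group G] [Fintype G]
    {C : Type u} [Category.{v} C] [Fintype C] [∀ x y : C, Fintype (x ⟶ y)]
    (F : C → Type w) [∀ x : C, MulAction G (F x)] [∀ x : C, Finite (F x)]
    (Fmap : ∀ {x y : C}, (x ⟶ y) → F x → F y)
    (hFid : ∀ (x : C) (a : F x), Fmap (𝟙 x) a = a)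
    (hFcomp : ∀ {x y z : C} (φ : x ⟶ y) (ψ : y ⟶ z) (a : F x),
      Fmap (φ ≫ ψ) a = Fmap ψ (Fmap φ a))
    (hFequiv : ∀ {x y : C} (φ : x ⟶ y) (g : G) (a : F x),
      Fmap φ (g • a) = g • Fmap φ a)
    (ν : C → C → ℚ)
    (hcorner : conv C (eFun C) (conv C ν (eFun C)) = ν)
    (hl : conv C (zeta C) ν = eFun C) (hr : conv C ν (zeta C) = eFun C) :
    ∀ H : Subgroup G, ∃ p q : Polynomial ℚ,
      q.eval (-1) ≠ 0 ∧
      PowerSeries.mk (fun n =>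
          (Nat.card { c : FChain F (fun φ => Fmap φ) n //
            ∀ (i : Fin (n + 1)), ∀ h ∈ H, h • c.pt i = c.pt i } : ℚ)) *
        (q : PowerSeries ℚ) = (p : PowerSeries ℚ) ∧
      p.eval (-1) = q.eval (-1) *
        ∑ x : C, (∑ y : C, ν x y) *
          (Nat.card { a : F x // ∀ h ∈ H, h • a = a } : ℚ) := by
  intro H
  set M := zetaMat C - eMat C
  set u : C → ℚ := fun x => (Nat.card {a : F x // ∀ h ∈ H, h • a = a} : ℚ)
  have hζν : zetaMat C * of ν = eMat C := hl
  have heν : eMat C * of ν = of ν := eMat_mul_of_corner hcorner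
  have hinv : (1 - (-1 : ℚ) • M) * (of ν + 1 - eMat C) = 1 := by
    rw [neg_one_smul, sub_neg_eq_add]
    exact one_add_zetaMat_sub_eMat_mul hζν heν
  refine ⟨(Polynomial.C ∘ u) ⬝ᵥ
      ((1 - (Polynomial.X : Polynomial ℚ) • M.map Polynomial.C).adjugate *ᵥ (Polynomial.C ∘ 1)),
    M.charpolyRev, ?_, ?_, ?_⟩
  · rw [eval_charpolyRev_eq_det]
    exact det_ne_zero_of_right_inverse hinv
  · simp_rw [FChain.card_fixed hFequiv, ← zetaMat_sub_eMat_pow_mulVec_one]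
    exact M.mk_dotProduct_pow_mulVec_mul_charpolyRev u 1
  · have hrow : (of ν + 1 - eMat C) *ᵥ 1 = of ν *ᵥ 1 := by
      rw [sub_mulVec, add_mulVec, one_mulVec, eMat_mulVec_one, add_sub_cancel_right]
    rw [eval_dotProduct_adjugate_mulVec, eval_charpolyRev_eq_det,
      adjugate_eq_det_smul_of_mul_eq_one hinv, smul_mulVec, dotProduct_smul, hrow]
    simp [u, dotProduct, mulVec, mul_comm]
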